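/- arXiv:2305.10022 — 4 statements merged into one kernel-verified Lean document; each statement's English description precedes it below -/
import Mathlib

section
/- Let (L,v) be a valued field with value group vL (written additively), let Σ be a nonempty final segment of vL^{>0}, let I_Σ := {a ∈ L : a ≠ 0 and v(a) ∈ Σ} ∪ {0} (an ideal of the valuation ring O_L), and let m ∈ ℕ with m ≥ 2. Then the following are equivalent: (a) I_Σ = I_Σ^m; (b) I_Σ = I_Σ^n for all n ∈ ℕ with n ≥ 2; (c) for every n ∈ ℕ with n ≥ 1, Σ = {γ ∈ vL^{>0} : there is s ∈ Σ with n·s ≤ γ}. -/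
open Polynomial

/-- The valuation ring of an additive valuation on a field. -/
def AddValuation.intsSubring {L : Type} [Field L] {Γ : Type} [AddCommGroup Γ] [LinearOrder Γ] [IsOrderedAddMonoid Γ]
    (v : AddValuation L (WithTop Γ)) : Subring L where
  carrier := {x | 0 ≤ v x}
  zero_mem' := by rw [Set.mem_setOf_eq, v.map_zero]; exact le_top
  one_mem' := by rw [Set.mem_setOf_eq, v.map_one]
  add_mem' := fun {x y} hx hy => le_trans (le_min hx hy) (v.map_add x y)
  mul_mem' := fun {x y} hx hy => by
    rw [Set.mem_setOf_eq, v.map_mul]; exact add_nonneg hx hy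
  neg_mem' := fun {x} hx => by rw [Set.mem_setOf_eq, v.map_neg]; exact hx

/-- The valuation ring of the restriction of `v` to `K`. -/
def ringOfInts (K : Type) [Field K] {L Γ : Type} [Field L] [Algebra K L]
    [AddCommGroup Γ] [LinearOrder Γ] [IsOrderedAddMonoid Γ] (v : AddValuation L (WithTop Γ)) : Subring K :=
  (v.intsSubring).comap (algebraMap K L)

noncomputable instance {K L Γ : Type} [Field K] [Field L] [Algebra K L]
    [AddCommGroup Γ] [LinearOrder Γ] [IsOrderedAddMonoid Γ] (v : AddValuation L (WithTop Γ)) :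
    Algebra (ringOfInts K v) v.intsSubring :=
  ((algebraMap K L).restrict (ringOfInts K v) v.intsSubring (fun _ hx => hx)).toAlgebra

noncomputable instance {K L Γ : Type} [Field K] [Field L] [Algebra K L]
    [AddCommGroup Γ] [LinearOrder Γ] [IsOrderedAddMonoid Γ] (v : AddValuation L (WithTop Γ)) :
    Algebra (ringOfInts K v) L :=
  ((algebraMap K L).comp (ringOfInts K v).subtype).toAlgebra

/-!
For `n ≥ 1` the power `I_S ^ n` consists of the elements of value at least `n • s` for some
`s ∈ S`: products of `n` generators have such values, and conversely an element of value at
least `n • v y`, with `v y ∈ S`, is divisible by `y ^ n` in `O_L`. Hence `I_S = I_S ^ n` exactly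
when every `γ ∈ S` dominates some `n • s` with `s ∈ S`, which for a final segment is the set
equality of (c). Finally `I = I ^ m` with `m ≥ 2` squeezes `I ^ 2` between `I ^ m` and `I`, so
`I` is idempotent and equals all its positive powers.
-/

theorem Ideal.isIdempotentElem_of_eq_pow {R : Type*} [CommSemiring R] {I : Ideal R} {m : ℕ}
    (hm : 2 ≤ m) (h : I = I ^ m) : IsIdempotentElem I :=
  le_antisymm Ideal.mul_le_left <| calc
    I = I ^ m := h
    _ ≤ I ^ 2 := Ideal.pow_le_pow_right hm
    _ = I * I := sq I

theorem eq_setOf_nsmul_le_iff {Γ : Type*} [AddCommMonoid Γ] [PartialOrder Γ]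
    [IsOrderedAddMonoid Γ] {S : Set Γ} {Q : Γ → Prop} (hsub : ∀ γ ∈ S, 0 < γ ∧ Q γ)
    (hfinal : ∀ s ∈ S, ∀ t, 0 < t → Q t → s ≤ t → t ∈ S) {n : ℕ} (hn : 1 ≤ n) :
    S = {γ | (0 < γ ∧ Q γ) ∧ ∃ s ∈ S, n • s ≤ γ} ↔
      ∀ γ ∈ S, ∃ s ∈ S, n • s ≤ γ := by
  refine ⟨fun h γ hγ => (h.subst (motive := (γ ∈ ·)) hγ).2, fun h => ?_⟩
  refine Set.Subset.antisymm (fun γ hγ => ⟨hsub γ hγ, h γ hγ⟩) ?_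
  rintro γ ⟨⟨hγ0, hγ⟩, s, hs, hsγ⟩
  have hs_le : s ≤ n • s := by
    simpa using nsmul_le_nsmul_left (hsub s hs).1.le hn
  exact hfinal s hs γ hγ0 hγ (hs_le.trans hsγ)

namespace WithTop

/-- `⊤` is put in separately so that this is the set of values of an ideal even for `S = ∅`. -/
def nsmulUpper {Γ : Type*} [AddMonoid Γ] [LE Γ] (S : Set Γ) (n : ℕ) : Set (WithTop Γ) :=
  {a | a = ⊤ ∨ ∃ s ∈ S, ((n • s : Γ) : WithTop Γ) ≤ a}

theorem isUpperSet_nsmulUpper {Γ : Type*} [AddMonoid Γ] [PartialOrder Γ] (S : Set Γ) (n : ℕ) :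
    IsUpperSet (nsmulUpper S n) := by
  rintro a b hab (rfl | ⟨s, hs, hsa⟩)
  · exact Or.inl (top_le_iff.1 hab)
  · exact Or.inr ⟨s, hs, hsa.trans hab⟩

theorem nsmulUpper_anti {Γ : Type*} [AddCommMonoid Γ] [PartialOrder Γ] [IsOrderedAddMonoid Γ]
    {S : Set Γ} (hS : ∀ s ∈ S, 0 ≤ s) {m n : ℕ} (hmn : m ≤ n) :
    nsmulUpper S n ⊆ nsmulUpper S m := by
  rintro a (rfl | ⟨s, hs, hsa⟩)
  · exact Or.inl rfl
  · exact Or.inr ⟨s, hs, (coe_le_coe.2 (nsmul_le_nsmul_left (hS s hs) hmn)).trans hsa⟩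

theorem add_mem_nsmulUpper {Γ : Type*} [AddCommMonoid Γ] [LinearOrder Γ] [IsOrderedAddMonoid Γ]
    {S : Set Γ} {m n : ℕ} {a b : WithTop Γ}
    (ha : a ∈ nsmulUpper S m) (hb : b ∈ nsmulUpper S n) : a + b ∈ nsmulUpper S (m + n) := by
  rcases ha with rfl | ⟨s, hs, hsa⟩
  · exact Or.inl (top_add b)
  rcases hb with rfl | ⟨t, ht, htb⟩
  · exact Or.inl (add_top a)
  refine Or.inr ⟨min s t, min_rec' (· ∈ S) hs ht, ?_⟩
  calc (((m + n) • min s t : Γ) : WithTop Γ)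
      = ((m • min s t : Γ) : WithTop Γ) + (n • min s t : Γ) := by rw [add_nsmul, coe_add]
    _ ≤ a + b := add_le_add
        ((coe_le_coe.2 (nsmul_le_nsmul_right (min_le_left s t) m)).trans hsa)
        ((coe_le_coe.2 (nsmul_le_nsmul_right (min_le_right s t) n)).trans htb)

end WithTop

namespace AddValuation

open WithTop

variable {L Γ : Type} [Field L] [AddCommGroup Γ] [LinearOrder Γ] [IsOrderedAddMonoid Γ]
  (v : AddValuation L (WithTop Γ))

theorem mem_intsSubring {x : L} : x ∈ v.intsSubring ↔ 0 ≤ v x := Iff.rfl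

theorem dvd_of_le_of_ne_zero {x y : v.intsSubring} (hy : (y : L) ≠ 0) (h : v y ≤ v x) :
    y ∣ x := by
  have hz : v (x / y : L) + v y = v x := by rw [← v.map_mul, div_mul_cancel₀ _ hy]
  have hz0 : 0 ≤ v (x / y : L) := by
    rwa [← WithTop.add_le_add_iff_right ((v.ne_top_iff).2 hy), zero_add, hz]
  exact ⟨⟨_, hz0⟩, Subtype.ext (mul_div_cancel₀ _ hy).symm⟩

/-- The ideal `I_S` of `O_L`. -/
def segmentIdeal (S : Set Γ) : Ideal v.intsSubring :=
  Ideal.span {x | ∃ γ ∈ S, v (x : L) = (γ : WithTop Γ)}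

def nsmulSegmentIdeal (S : Set Γ) (n : ℕ) : Ideal v.intsSubring where
  carrier := {x | v (x : L) ∈ nsmulUpper S n}
  zero_mem' := Or.inl v.map_zero
  add_mem' {x y} hx hy := isUpperSet_nsmulUpper S n (v.map_add x y) (min_rec' _ hx hy)
  smul_mem' c x hx := isUpperSet_nsmulUpper S n
    (by rw [smul_eq_mul, Subring.coe_mul, v.map_mul]; exact le_add_of_nonneg_left c.2) hx

theorem mem_nsmulSegmentIdeal {S : Set Γ} {n : ℕ} {x : v.intsSubring} :
    x ∈ v.nsmulSegmentIdeal S n ↔ v (x : L) ∈ nsmulUpper S n := Iff.rfl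

theorem nsmulSegmentIdeal_anti {S : Set Γ} (hS : ∀ s ∈ S, 0 ≤ s) {m n : ℕ}
    (hmn : m ≤ n) :
    v.nsmulSegmentIdeal S n ≤ v.nsmulSegmentIdeal S m :=
  fun _ hx => nsmulUpper_anti hS hmn hx

theorem nsmulSegmentIdeal_mul_le (S : Set Γ) (m n : ℕ) :
    v.nsmulSegmentIdeal S m * v.nsmulSegmentIdeal S n ≤ v.nsmulSegmentIdeal S (m + n) :=
  Ideal.mul_le.2 fun x hx y hy => by
    rw [mem_nsmulSegmentIdeal, Subring.coe_mul, v.map_mul]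
    exact add_mem_nsmulUpper hx hy

theorem segmentIdeal_le_nsmulSegmentIdeal_one (S : Set Γ) :
    v.segmentIdeal S ≤ v.nsmulSegmentIdeal S 1 :=
  Ideal.span_le.2 fun _ ⟨γ, hγ, hx⟩ => Or.inr ⟨γ, hγ, by rw [one_nsmul, hx]⟩

theorem nsmulSegmentIdeal_le_segmentIdeal_pow {S : Set Γ}
    (hsub : ∀ γ ∈ S, 0 < γ ∧ ∃ x : L, x ≠ 0 ∧ v x = (γ : WithTop Γ)) (n : ℕ) :
    v.nsmulSegmentIdeal S n ≤ v.segmentIdeal S ^ n := by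
  rintro x (hx | ⟨s, hs, hsx⟩)
  · rw [show x = 0 from Subtype.ext ((v.top_iff).1 hx)]
    exact zero_mem _
  obtain ⟨hs0, y, hy0, hy⟩ := hsub s hs
  have hyO : y ∈ v.intsSubring := by
    rw [mem_intsSubring, hy]
    exact coe_nonneg.2 hs0.le
  have hyI : (⟨y, hyO⟩ : v.intsSubring) ∈ v.segmentIdeal S :=
    Ideal.subset_span ⟨s, hs, hy⟩
  refine Ideal.mem_of_dvd _ (v.dvd_of_le_of_ne_zero (pow_ne_zero n hy0) ?_)
    (Ideal.pow_mem_pow hyI n)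
  rwa [SubmonoidClass.coe_pow, v.map_pow, hy, ← coe_nsmul]

theorem segmentIdeal_pow_eq {S : Set Γ}
    (hsub : ∀ γ ∈ S, 0 < γ ∧ ∃ x : L, x ≠ 0 ∧ v x = (γ : WithTop Γ)) {n : ℕ}
    (hn : 1 ≤ n) :
    v.segmentIdeal S ^ n = v.nsmulSegmentIdeal S n := by
  refine le_antisymm ?_ (v.nsmulSegmentIdeal_le_segmentIdeal_pow hsub n)
  induction n, hn using Nat.le_induction with
  | base => simpa using v.segmentIdeal_le_nsmulSegmentIdeal_one S
  | succ k _ ih =>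
    rw [pow_succ]
    exact (Ideal.mul_mono ih (v.segmentIdeal_le_nsmulSegmentIdeal_one S)).trans
      (v.nsmulSegmentIdeal_mul_le S k 1)

theorem nsmulSegmentIdeal_one_le_iff {S : Set Γ}
    (hsub : ∀ γ ∈ S, 0 < γ ∧ ∃ x : L, x ≠ 0 ∧ v x = (γ : WithTop Γ))
    (hfinal : ∀ s ∈ S, ∀ t : Γ, 0 < t → (∃ x : L, x ≠ 0 ∧ v x = (t : WithTop Γ)) →
      s ≤ t → t ∈ S) {n : ℕ} :
    v.nsmulSegmentIdeal S 1 ≤ v.nsmulSegmentIdeal S n ↔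
      ∀ γ ∈ S, ∃ s ∈ S, n • s ≤ γ := by
  constructor
  · intro h γ hγ
    obtain ⟨hγ0, x, hx0, hx⟩ := hsub γ hγ
    have hxO : x ∈ v.intsSubring := by
      rw [mem_intsSubring, hx]
      exact coe_nonneg.2 hγ0.le
    have hxJ : (⟨x, hxO⟩ : v.intsSubring) ∈ v.nsmulSegmentIdeal S 1 :=
      Or.inr ⟨γ, hγ, by rw [one_nsmul, hx]⟩
    rcases h hxJ with hx_top | ⟨s, hs, hsx⟩
    · exact absurd ((v.top_iff).1 hx_top) hx0
    · exact ⟨s, hs, coe_le_coe.1 (hx ▸ hsx)⟩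
  · rintro h x (hx | ⟨s, hs, hsx⟩)
    · exact Or.inl hx
    by_cases hx0 : (x : L) = 0
    · exact Or.inl ((v.top_iff).2 hx0)
    obtain ⟨γ, hγ⟩ := WithTop.ne_top_iff_exists.1 ((v.ne_top_iff).2 hx0)
    have hsγ : s ≤ γ := by rwa [one_nsmul, ← hγ, coe_le_coe] at hsx
    have hγS : γ ∈ S :=
      hfinal s hs γ ((hsub s hs).1.trans_le hsγ) ⟨x, hx0, hγ.symm⟩ hsγ
    obtain ⟨t, ht, htγ⟩ := h γ hγS
    exact Or.inr ⟨t, ht, hγ ▸ coe_le_coe.2 htγ⟩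

theorem segmentIdeal_eq_pow_iff {S : Set Γ}
    (hsub : ∀ γ ∈ S, 0 < γ ∧ ∃ x : L, x ≠ 0 ∧ v x = (γ : WithTop Γ))
    (hfinal : ∀ s ∈ S, ∀ t : Γ, 0 < t → (∃ x : L, x ≠ 0 ∧ v x = (t : WithTop Γ)) →
      s ≤ t → t ∈ S) {n : ℕ} (hn : 1 ≤ n) :
    v.segmentIdeal S = v.segmentIdeal S ^ n ↔ ∀ γ ∈ S, ∃ s ∈ S, n • s ≤ γ := by
  nth_rw 1 [← pow_one (v.segmentIdeal S)]
  rw [v.segmentIdeal_pow_eq hsub le_rfl, v.segmentIdeal_pow_eq hsub hn,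
    ← v.nsmulSegmentIdeal_one_le_iff hsub hfinal]
  have hS : ∀ s ∈ S, 0 ≤ s := fun s hs => (hsub s hs).1.le
  exact ⟨le_of_eq, fun h => le_antisymm h (v.nsmulSegmentIdeal_anti hS hn)⟩

end AddValuation

theorem stmt2_general {L Γ : Type} [Field L] [AddCommGroup Γ] [LinearOrder Γ] [IsOrderedAddMonoid Γ]
    (v : AddValuation L (WithTop Γ)) (S : Set Γ)
    (hsub : ∀ γ ∈ S, 0 < γ ∧ ∃ x : L, x ≠ 0 ∧ v x = (γ : WithTop Γ))
    (hfinal : ∀ s ∈ S, ∀ t : Γ, 0 < t → (∃ x : L, x ≠ 0 ∧ v x = (t : WithTop Γ)) →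
      s ≤ t → t ∈ S)
    (m : ℕ) (hm : 2 ≤ m) :
    List.TFAE
      [ Ideal.span {x : v.intsSubring | ∃ γ ∈ S, v (x : L) = (γ : WithTop Γ)} =
          (Ideal.span {x : v.intsSubring | ∃ γ ∈ S, v (x : L) = (γ : WithTop Γ)}) ^ m,
        (∀ n : ℕ, 2 ≤ n →
          Ideal.span {x : v.intsSubring | ∃ γ ∈ S, v (x : L) = (γ : WithTop Γ)} =
            (Ideal.span {x : v.intsSubring | ∃ γ ∈ S, v (x : L) = (γ : WithTop Γ)}) ^ n),
        (∀ n : ℕ, 1 ≤ n →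
          S = {γ : Γ | (0 < γ ∧ ∃ x : L, x ≠ 0 ∧ v x = (γ : WithTop Γ)) ∧
                ∃ s ∈ S, n • s ≤ γ}) ] := by
  tfae_have 1 → 3 := fun h n hn =>
    (eq_setOf_nsmul_le_iff hsub hfinal hn).2 <| (v.segmentIdeal_eq_pow_iff hsub hfinal hn).1
      ((Ideal.isIdempotentElem_of_eq_pow hm h).pow_eq (by omega)).symm
  tfae_have 3 → 2 := fun h n hn =>
    (v.segmentIdeal_eq_pow_iff hsub hfinal (by omega)).2
      ((eq_setOf_nsmul_le_iff hsub hfinal (by omega)).1 (h n (by omega)))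
  tfae_have 2 → 1 := fun h => h m hm
  tfae_finish

/-- **Lemma (idempotent ideals).** Let `(L,v)` be a valued field, `S` a nonempty final
segment of `vL^{>0}`, `I_S` the corresponding ideal of `O_L`, and `m ≥ 2`.  TFAE:
(a) `I_S = I_S^m`; (b) `I_S = I_S^n` for all `n ≥ 2`;
(c) for all `n ≥ 1`, `S = {γ ∈ vL^{>0} | ∃ s ∈ S, n•s ≤ γ}`. -/
theorem stmt2 {L Γ : Type} [Field L] [AddCommGroup Γ] [LinearOrder Γ] [IsOrderedAddMonoid Γ]
    (v : AddValuation L (WithTop Γ)) (S : Set Γ)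
    (hsub : ∀ γ ∈ S, 0 < γ ∧ ∃ x : L, x ≠ 0 ∧ v x = (γ : WithTop Γ))
    (hne : S.Nonempty)
    (hfinal : ∀ s ∈ S, ∀ t : Γ, 0 < t → (∃ x : L, x ≠ 0 ∧ v x = (t : WithTop Γ)) →
      s ≤ t → t ∈ S)
    (m : ℕ) (hm : 2 ≤ m) :
    List.TFAE
      [ Ideal.span {x : v.intsSubring | ∃ γ ∈ S, v (x : L) = (γ : WithTop Γ)} =
          (Ideal.span {x : v.intsSubring | ∃ γ ∈ S, v (x : L) = (γ : WithTop Γ)}) ^ m,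
        (∀ n : ℕ, 2 ≤ n →
          Ideal.span {x : v.intsSubring | ∃ γ ∈ S, v (x : L) = (γ : WithTop Γ)} =
            (Ideal.span {x : v.intsSubring | ∃ γ ∈ S, v (x : L) = (γ : WithTop Γ)}) ^ n),
        (∀ n : ℕ, 1 ≤ n →
          S = {γ : Γ | (0 < γ ∧ ∃ x : L, x ≠ 0 ∧ v x = (γ : WithTop Γ)) ∧
                ∃ s ∈ S, n • s ≤ γ}) ] :=
  stmt2_general v S hsub hfinal m hm
end

section
/- Let (K(x)|K,v) be an immediate extension of valued fields which is pure in x. For c ∈ K choose t_c ∈ K with v(t_c) = −v(x−c) (possible since the extension is immediate) and set x_c := t_c·(x−c) ∈ O_{K(x)}. Then: (i) for every polynomial g ∈ K[X] with g(x) ∈ O_{K(x)} there exists c ∈ K such that g(x) ∈ O_K[x_c]; (ii) if in addition x is algebraic over K, then O_{K(x)} = ⋃_{c ∈ K} O_K[x_c]. -/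
/-!
Write `g(x) = ∑ᵢ ∂ᵢg(c) (x - c)ⁱ` with Hasse derivatives `∂ᵢ`, after reducing `deg g` below
`[K(x):K]`. By purity, each `v(∂ᵢg(c))` is a constant `δᵢ` once `v(x - c)` is large enough. As the
extension is immediate, `v(x - K)` has no maximum, so it contains a value `γ` beyond that threshold
which avoids the finitely many solutions of `δᵢ + iγ = δⱼ + jγ`, `i ≠ j`. For `c` with
`v(x - c) = γ` the nonzero terms have pairwise distinct values, so `v(g(x))` is their minimum and
every term is integral. Dividing the `i`-th coefficient by `t_cⁱ` then writes `g(x)` as a polynomial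
in `x_c` with coefficients in `O_K`.
-/

open Polynomial

section OrderedGroup

variable {Γ : Type*} [AddCommGroup Γ] [LinearOrder Γ] [IsOrderedAddMonoid Γ]

theorem WithTop.subsingleton_setOf_add_nsmul_eq {i j : ℕ} (hij : i ≠ j) {a b : WithTop Γ}
    (ha : a ≠ ⊤) : {γ : WithTop Γ | γ ≠ ⊤ ∧ a + i • γ = b + j • γ}.Subsingleton := by
  rintro γ₁ ⟨h₁, e₁⟩ γ₂ ⟨h₂, e₂⟩
  lift a to Γ using ha
  lift γ₁ to Γ using h₁
  lift γ₂ to Γ using h₂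
  lift b to Γ using by rintro rfl; simp [← coe_nsmul, ← coe_add] at e₁
  norm_cast at e₁ e₂ ⊢
  have h : ((i : ℤ) - j) • (γ₁ - γ₂) = 0 :=
    calc ((i : ℤ) - j) • (γ₁ - γ₂)
        = (a + i • γ₁ - (b + j • γ₁)) - (a + i • γ₂ - (b + j • γ₂)) := by
          simp only [sub_smul, smul_sub, natCast_zsmul]
          abel
      _ = 0 := by rw [e₁, e₂, sub_self, sub_self, sub_zero]
  exact sub_eq_zero.mp ((smul_eq_zero.mp h).resolve_left (sub_ne_zero.mpr (mod_cast hij)))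

def collisionValues (s : Finset ℕ) (δ : ℕ → WithTop Γ) : Set (WithTop Γ) :=
  {γ | γ ≠ ⊤ ∧ ∃ i ∈ s, ∃ j ∈ s, i ≠ j ∧ δ i ≠ ⊤ ∧ δ i + i • γ = δ j + j • γ}

theorem finite_collisionValues (s : Finset ℕ) (δ : ℕ → WithTop Γ) :
    (collisionValues s δ).Finite := by
  classical
  refine Set.Finite.subset (Set.Finite.biUnion (s.filter (δ · ≠ ⊤)).finite_toSet fun i hi ↦
      Set.Finite.biUnion (s.erase i).finite_toSet fun j hj ↦
        (WithTop.subsingleton_setOf_add_nsmul_eq (Finset.ne_of_mem_erase hj).symm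
          (Finset.mem_filter.mp hi).2 (b := δ j)).finite) ?_
  rintro γ ⟨hγ, i, hi, j, hj, hij, hδi, he⟩
  simp only [Set.mem_iUnion]
  exact ⟨i, Finset.mem_filter.mpr ⟨hi, hδi⟩, j, Finset.mem_erase.mpr ⟨hij.symm, hj⟩, hγ, he⟩

end OrderedGroup

theorem Polynomial.aeval_eq_sum_range_hasseDeriv {R A : Type*} [CommRing R] [CommRing A]
    [Algebra R A] (p : R[X]) (r : R) (x : A) :
    aeval x p = ∑ i ∈ Finset.range (p.natDegree + 1),
      algebraMap R A ((hasseDeriv i p).eval r) * (x - algebraMap R A r) ^ i := by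
  have : aeval x p = aeval (x - algebraMap R A r) (taylor r p) := by
    simp [taylor_apply, aeval_comp]
  rw [this, aeval_eq_sum_range, natDegree_taylor]
  simp only [taylor_coeff, Algebra.smul_def]

theorem AddValuation.map_sum_le_of_injOn {R Γ₀ : Type*} [Ring R]
    [LinearOrderedAddCommMonoidWithTop Γ₀] (v : AddValuation R Γ₀) {ι : Type*} {s : Finset ι}
    {f : ι → R} (hf : Set.InjOn (fun i ↦ v (f i)) {i | i ∈ s ∧ v (f i) ≠ ⊤}) {i : ι} (hi : i ∈ s) :
    v (∑ k ∈ s, f k) ≤ v (f i) := by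
  classical
  obtain ⟨j, hj, hmin⟩ := s.exists_min_image (fun k ↦ v (f k)) ⟨i, hi⟩
  by_cases htop : v (f j) = ⊤
  · rw [top_le_iff.mp (htop ▸ hmin i hi : ⊤ ≤ v (f i))]
    exact le_top
  have hlt : ∀ k ∈ s \ {j}, v (f j) < v (f k) := fun k hk ↦ by
    obtain ⟨hks, hkj⟩ := Finset.mem_sdiff.mp hk
    exact (hmin k hks).lt_of_ne fun h ↦
      Finset.notMem_singleton.mp hkj (hf ⟨hj, htop⟩ ⟨hks, h ▸ htop⟩ h).symm
  rw [Finset.sum_eq_add_sum_sdiff_singleton_of_mem hj,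
    v.map_add_eq_of_lt_left (v.map_lt_sum htop hlt)]
  exact hmin i hi

theorem exists_forall_le_imp_forall_mem {ι α β : Type*} [LinearOrder β] [Nonempty α] (f : α → β)
    (s : Finset ι) {P : ι → α → Prop} (h : ∀ i, ∃ a, ∀ b, f a ≤ f b → P i b) :
    ∃ a, ∀ b, f a ≤ f b → ∀ i ∈ s, P i b := by
  choose a ha using h
  rcases s.eq_empty_or_nonempty with rfl | hs
  · exact ⟨Classical.arbitrary α, fun _ _ _ hi ↦ absurd hi (Finset.notMem_empty _)⟩
  obtain ⟨i₀, -, hi₀⟩ := s.exists_max_image (fun i ↦ f (a i)) hs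
  exact ⟨a i₀, fun b hb i hi ↦ ha i b ((hi₀ i hi).trans hb)⟩

theorem exists_le_notMem_of_finite {α β : Type*} [LinearOrder β] {f : α → β}
    (hf : ∀ a, ∃ b, f a < f b) (a₀ : α) {S : Set β} (hS : S.Finite) :
    ∃ a, f a₀ ≤ f a ∧ f a ∉ S := by
  by_contra! h
  obtain ⟨a, ha, hmax⟩ := Set.Finite.exists_maximalFor' f {a | f a₀ ≤ f a}
    (hS.subset (Set.image_subset_iff.mpr h)) ⟨a₀, le_rfl⟩
  obtain ⟨b, hb⟩ := hf a
  exact hb.not_ge (hmax (ha.trans hb.le) hb.le)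

theorem exists_natDegree_lt_finrank_aeval_eq {K L : Type*} [Field K] [Field L] [Algebra K L]
    {x : L} (hgen : Algebra.adjoin K {x} = ⊤) (g : K[X]) :
    ∃ g' : K[X], (IsAlgebraic K x → g'.natDegree < Module.finrank K L) ∧
      aeval x g' = aeval x g := by
  by_cases halg : IsAlgebraic K x
  · have hint : IsIntegral K x := halg.isIntegral
    have hfinrank : Module.finrank K L = (minpoly K x).natDegree := by
      rw [← IntermediateField.finrank_top', ← IntermediateField.adjoin_eq_top_of_algebra K {x} hgen,
        IntermediateField.adjoin.finrank hint]
    refine ⟨g %ₘ minpoly K x, fun _ ↦ ?_, aeval_modByMonic_eq_self_of_root (minpoly.aeval K x)⟩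
    rw [hfinrank]
    exact natDegree_modByMonic_lt g (minpoly.monic hint) (minpoly.ne_one K x)
  · exact ⟨g, fun h ↦ absurd h halg, rfl⟩

section ValuedExtension

variable {K L Γ : Type} [Field K] [Field L] [Algebra K L]
    [AddCommGroup Γ] [LinearOrder Γ] [IsOrderedAddMonoid Γ] (v : AddValuation L (WithTop Γ))

theorem exists_valuation_sub_algebraMap_gt
    (himmv : ∀ y : L, y ≠ 0 → ∃ c : K, c ≠ 0 ∧ v y = v (algebraMap K L c))
    (himmr : ∀ y : L, 0 ≤ v y → ∃ c : K, 0 < v (y - algebraMap K L c))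
    {x : L} {c : K} (hxc : x - algebraMap K L c ≠ 0) :
    ∃ c' : K, v (x - algebraMap K L c) < v (x - algebraMap K L c') := by
  obtain ⟨d, hd0, hd⟩ := himmv _ hxc
  have hvx : v (x - algebraMap K L c) ≠ ⊤ := v.ne_top_iff.mpr hxc
  have hunit : v ((x - algebraMap K L c) / algebraMap K L d) = 0 := by
    rw [div_eq_mul_inv, v.map_mul, v.map_inv, ← hd]
    exact LinearOrderedAddCommGroupWithTop.add_neg_cancel_of_ne_top hvx
  obtain ⟨e, he⟩ := himmr _ hunit.ge
  have hφd : algebraMap K L d ≠ 0 := (_root_.map_ne_zero _).mpr hd0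
  have hsplit : x - algebraMap K L (c + d * e) = algebraMap K L d *
      ((x - algebraMap K L c) / algebraMap K L d - algebraMap K L e) := by
    rw [map_add, map_mul]
    field_simp
    ring
  refine ⟨c + d * e, ?_⟩
  rw [hsplit, v.map_mul, ← hd]
  simpa using WithTop.add_lt_add_left hvx he

theorem valuation_algebraMap_mul_eq_zero {t : K} {y : L} (hy : y ≠ 0)
    (ht : v (algebraMap K L t) = -v y) : v (algebraMap K L t * y) = 0 := by
  rw [v.map_mul, ht, add_comm]
  exact LinearOrderedAddCommGroupWithTop.add_neg_cancel_of_ne_top (v.ne_top_iff.mpr hy)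

theorem valuation_algebraMap_mul_nonneg {t : K} {y : L} (ht : v (algebraMap K L t) = -v y) :
    0 ≤ v (algebraMap K L t * y) := by
  rcases eq_or_ne y 0 with rfl | hy
  · simp
  · exact (valuation_algebraMap_mul_eq_zero v hy ht).ge

theorem algebraMap_mul_pow_mem_adjoin {a t : K} {y : L} (hy : y ≠ 0)
    (ht : v (algebraMap K L t) = -v y) {n : ℕ} (h : 0 ≤ v (algebraMap K L a * y ^ n)) :
    algebraMap K L a * y ^ n ∈ Algebra.adjoin (ringOfInts K v) {algebraMap K L t * y} := by
  have hunit := valuation_algebraMap_mul_eq_zero v hy ht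
  have ht0 : algebraMap K L t ≠ 0 :=
    left_ne_zero_of_mul (v.ne_top_iff.mp (hunit ▸ WithTop.zero_ne_top))
  have hrw : algebraMap K L a * y ^ n =
      algebraMap K L (a / t ^ n) * (algebraMap K L t * y) ^ n := by
    rw [map_div₀, map_pow, mul_pow]
    field_simp
  have hb : a / t ^ n ∈ ringOfInts K v := by
    rw [hrw, v.map_mul, v.map_pow, hunit, smul_zero, add_zero] at h
    exact Subring.mem_comap.mpr h
  have hcoe : algebraMap K L (a / t ^ n) = algebraMap (ringOfInts K v) L ⟨_, hb⟩ := rfl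
  rw [hrw, hcoe]
  exact Subalgebra.mul_mem _ (Subalgebra.algebraMap_mem _ _)
    (Subalgebra.pow_mem _ (Algebra.subset_adjoin (Set.mem_singleton _)) n)

theorem aeval_mem_adjoin_of_forall_nonneg {g : K[X]} {x : L} {c t : K}
    (hxc : x - algebraMap K L c ≠ 0) (ht : v (algebraMap K L t) = -v (x - algebraMap K L c))
    (hg : ∀ i ∈ Finset.range (g.natDegree + 1),
      0 ≤ v (algebraMap K L ((hasseDeriv i g).eval c) * (x - algebraMap K L c) ^ i)) :
    aeval x g ∈ Algebra.adjoin (ringOfInts K v) {algebraMap K L t * (x - algebraMap K L c)} := by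
  rw [aeval_eq_sum_range_hasseDeriv g c]
  exact Subalgebra.sum_mem _ fun i hi ↦ algebraMap_mul_pow_mem_adjoin v hxc ht (hg i hi)

theorem valuation_hasseDeriv_mul_pow_nonneg {g : K[X]} {x : L} {c : K} {δ : ℕ → WithTop Γ}
    (hxc : x - algebraMap K L c ≠ 0)
    (hδ : ∀ i ∈ Finset.range (g.natDegree + 1),
      v (algebraMap K L ((hasseDeriv i g).eval c)) = δ i)
    (hc : v (x - algebraMap K L c) ∉ collisionValues (Finset.range (g.natDegree + 1)) δ)
    (hg : 0 ≤ v (aeval x g)) :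
    ∀ i ∈ Finset.range (g.natDegree + 1),
      0 ≤ v (algebraMap K L ((hasseDeriv i g).eval c) * (x - algebraMap K L c) ^ i) := by
  set s := Finset.range (g.natDegree + 1)
  set F : ℕ → L := fun i ↦ algebraMap K L ((hasseDeriv i g).eval c) * (x - algebraMap K L c) ^ i
  have hF : ∀ i ∈ s, v (F i) = δ i + i • v (x - algebraMap K L c) := fun i hi ↦ by
    rw [v.map_mul, v.map_pow, hδ i hi]
  have hinj : Set.InjOn (fun i ↦ v (F i)) {i | i ∈ s ∧ v (F i) ≠ ⊤} := by
    rintro i ⟨hi, hi_top⟩ j ⟨hj, -⟩ hij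
    by_contra hne
    rw [hF i hi] at hi_top
    refine hc ⟨v.ne_top_iff.mpr hxc, i, hi, j, hj, hne, fun h ↦ hi_top ?_, ?_⟩
    · rw [h, top_add]
    · rwa [← hF i hi, ← hF j hj]
  intro i hi
  calc 0 ≤ v (aeval x g) := hg
    _ = v (∑ k ∈ s, F k) := by rw [aeval_eq_sum_range_hasseDeriv g c]
    _ ≤ v (F i) := v.map_sum_le_of_injOn hinj hi

theorem adjoin_subset_setOf_nonneg {z : L} (hz : 0 ≤ v z) :
    (Algebra.adjoin (ringOfInts K v) {z} : Set L) ⊆ {y | 0 ≤ v y} := fun y hy ↦ by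
  induction hy using Algebra.adjoin_induction with
  | mem y hy => exact (Set.mem_singleton_iff.mp hy) ▸ hz
  | algebraMap r => exact r.2
  | add y₁ y₂ _ _ h₁ h₂ => exact v.intsSubring.add_mem h₁ h₂
  | mul y₁ y₂ _ _ h₁ h₂ => exact v.intsSubring.mul_mem h₁ h₂

theorem exists_aeval_mem_adjoin {x : L} (hgen : Algebra.adjoin K {x} = ⊤)
    (himmv : ∀ y : L, y ≠ 0 → ∃ c : K, c ≠ 0 ∧ v y = v (algebraMap K L c))
    (himmr : ∀ y : L, 0 ≤ v y → ∃ c : K, 0 < v (y - algebraMap K L c))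
    (hpure : ∀ g : K[X], (IsAlgebraic K x → g.natDegree < Module.finrank K L) →
      ∃ c₀ : K, ∃ δ : WithTop Γ, ∀ c : K,
        v (x - algebraMap K L c₀) ≤ v (x - algebraMap K L c) → v (algebraMap K L (g.eval c)) = δ)
    {t : K → K} (ht : ∀ c : K, v (algebraMap K L (t c)) = -v (x - algebraMap K L c))
    {g : K[X]} (hg : 0 ≤ v (aeval x g)) :
    ∃ c : K, aeval x g ∈
      Algebra.adjoin (ringOfInts K v) {algebraMap K L (t c) * (x - algebraMap K L c)} := by
  by_cases hx : x ∈ Set.range (algebraMap K L)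
  · obtain ⟨c, rfl⟩ := hx
    rw [aeval_algebraMap_apply_eq_algebraMap_eval] at hg ⊢
    exact ⟨c, Subalgebra.algebraMap_mem _ (⟨_, hg⟩ : ringOfInts K v)⟩
  have hxc : ∀ c : K, x - algebraMap K L c ≠ 0 := fun c h ↦ hx ⟨c, (sub_eq_zero.mp h).symm⟩
  obtain ⟨g', hdeg, hg'⟩ := exists_natDegree_lt_finrank_aeval_eq hgen g
  rw [← hg'] at hg ⊢
  choose c₀ δ hδ using fun i ↦ hpure (hasseDeriv i g') fun halg ↦
    ((natDegree_hasseDeriv_le g' i).trans (Nat.sub_le _ _)).trans_lt (hdeg halg)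
  obtain ⟨c₁, hc₁⟩ := exists_forall_le_imp_forall_mem (fun c ↦ v (x - algebraMap K L c))
    (Finset.range (g'.natDegree + 1)) fun i ↦ ⟨c₀ i, hδ i⟩
  obtain ⟨c, hc₁c, hc⟩ := exists_le_notMem_of_finite
    (fun c ↦ exists_valuation_sub_algebraMap_gt v himmv himmr (hxc c)) c₁
    (finite_collisionValues (Finset.range (g'.natDegree + 1)) δ)
  exact ⟨c, aeval_mem_adjoin_of_forall_nonneg v (hxc c) (ht c)
    (valuation_hasseDeriv_mul_pow_nonneg v (hxc c) (hc₁ c hc₁c) hc hg)⟩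

end ValuedExtension

/-- **Lemma (generation of the valuation ring).** Let `(K(x)|K,v)` be an immediate
extension which is pure in `x`.  For `c ∈ K` choose `t c ∈ K` with
`v(t c) = −v(x−c)` and set `x_c := t_c·(x−c)`.  Then:
(i) every `g(x) ∈ O_{K(x)}` with `g ∈ K[X]` lies in some `O_K[x_c]`;
(ii) if `x` is algebraic over `K`, then `O_{K(x)} = ⋃_c O_K[x_c]`. -/
theorem stmt4 {K L Γ : Type} [Field K] [Field L] [Algebra K L]
    [AddCommGroup Γ] [LinearOrder Γ] [IsOrderedAddMonoid Γ]
    (v : AddValuation L (WithTop Γ))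
    -- `L = K(x)`
    (x : L) (hgen : Algebra.adjoin K {x} = ⊤)
    -- the extension is immediate: same value group and same residue field
    (himmv : ∀ y : L, y ≠ 0 → ∃ c : K, c ≠ 0 ∧ v y = v (algebraMap K L c))
    (himmr : ∀ y : L, 0 ≤ v y → ∃ c : K, 0 < v (y - algebraMap K L c))
    -- the extension is pure in `x` (with `deg g < [K(x):K]`, no degree restriction
    -- if `x` is transcendental)
    (hpure : ∀ g : Polynomial K,
      (IsAlgebraic K x → g.natDegree < Module.finrank K L) →
      ∃ c₀ : K, ∃ δ : WithTop Γ, ∀ c : K,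
        v (x - algebraMap K L c₀) ≤ v (x - algebraMap K L c) →
        v (algebraMap K L (g.eval c)) = δ)
    -- the elements `t c`
    (t : K → K)
    (ht : ∀ c : K, v (algebraMap K L (t c)) = - v (x - algebraMap K L c)) :
    (∀ g : Polynomial K, 0 ≤ v (Polynomial.aeval x g) →
      ∃ c : K, Polynomial.aeval x g ∈
        Algebra.adjoin (ringOfInts K v)
          {algebraMap K L (t c) * (x - algebraMap K L c)}) ∧
    (IsAlgebraic K x →
      {y : L | 0 ≤ v y} =
        ⋃ c : K, (Algebra.adjoin (ringOfInts K v)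
          {algebraMap K L (t c) * (x - algebraMap K L c)} : Set L)) := by
  have hint : ∀ g : K[X], 0 ≤ v (aeval x g) → ∃ c : K, aeval x g ∈
      Algebra.adjoin (ringOfInts K v) {algebraMap K L (t c) * (x - algebraMap K L c)} :=
    fun g hg ↦ exists_aeval_mem_adjoin v hgen himmv himmr hpure ht hg
  refine ⟨hint, fun _ ↦ Set.Subset.antisymm (fun y hy ↦ ?_) (Set.iUnion_subset fun c ↦
    adjoin_subset_setOf_nonneg v (valuation_algebraMap_mul_nonneg v (ht c)))⟩
  have hy' : y ∈ (aeval (R := K) x).range := by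
    rw [← Algebra.adjoin_singleton_eq_range_aeval, hgen]
    trivial
  obtain ⟨g, rfl⟩ := hy'
  exact Set.mem_iUnion.mpr (hint g hy)
end

section
/- Let (L|K,v) be an Artin-Schreier defect extension of degree p with Artin-Schreier generator θ. For each c ∈ K choose t_c ∈ K with v(t_c) = −v(θ−c), set θ_c := t_c·(θ−c), and let g_c ∈ K[X] be the minimal polynomial of θ_c over K. Let I be the O_L-ideal generated by {t_c : c ∈ K}. Then: (i) g_c'(θ_c) = −t_c^{p−1} for every c ∈ K; (ii) the O_L-ideal generated by {g_c'(θ_c) : c ∈ K} equals I^{p−1}; (iii) the nonzero elements of I are exactly those x ∈ L for which there is c ∈ K with v(x) ≥ −v(θ−c). -/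
/-!
The Artin–Schreier automorphism `θ ↦ θ + 1` transports `v` to an equivalent valuation because the
extension is unibranched; this forces `v (θ - c) ≤ 0`, so every `t_c` lies in `O_L`. The minimal
polynomial of `θ_c` is `X^p - t_c^{p-1} X - t_c^p (a + c - c^p)`, whose derivative in characteristic
`p` is the constant `-t_c^{p-1}`. In `O_L` divisibility is comparison of values, so the principal
ideals `(t_c)` form a chain: `I` consists of the elements whose value dominates some `v t_c`, and
`I^n` is generated by the `t_c^n`.
-/

open Polynomial

theorem LinearOrderedAddCommGroupWithTop.neg_nonneg_of_nonpos {α : Type*}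
    [LinearOrderedAddCommGroupWithTop α] {a : α} (ha : a ≤ 0) : 0 ≤ -a := by
  rcases ha.lt_or_eq with hneg | rfl
  · exact (neg_pos.mpr (.inl hneg)).le
  · rw [neg_zero]

theorem Subring.setOf_exists_coe_eq_range {L ι : Type*} [Ring L] {S : Subring L} {F : ι → L}
    {G : ι → S} (hG : ∀ i, (G i : L) = F i) : {x : S | ∃ i, (x : L) = F i} = Set.range G := by
  ext x
  simp [Subtype.ext_iff, hG, eq_comm]

namespace AddValuation

variable {L Γ : Type} [Field L] [AddCommGroup Γ] [LinearOrder Γ] [IsOrderedAddMonoid Γ]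
  {v : AddValuation L (WithTop Γ)}

theorem mem_span_singleton_intsSubring_iff {y z : v.intsSubring} :
    y ∈ Ideal.span {z} ↔ v (z : L) ≤ v (y : L) := by
  rw [Ideal.mem_span_singleton']
  constructor
  · rintro ⟨r, rfl⟩
    rw [Subring.coe_mul, v.map_mul]
    exact le_add_of_nonneg_left r.2
  · intro h
    rcases eq_or_ne (z : L) 0 with hz | hz
    · refine ⟨0, Subtype.ext ?_⟩
      rw [hz, v.map_zero, top_le_iff, v.top_iff] at h
      simp [h]
    · have hq : v ((y : L) / z) + v (z : L) = v (y : L) := by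
        rw [← v.map_mul, div_mul_cancel₀ _ hz]
      have hq0 : 0 ≤ v ((y : L) / z) := by
        rwa [← WithTop.add_le_add_iff_right (v.ne_top_iff.mpr hz), zero_add, hq]
      exact ⟨⟨(y : L) / z, hq0⟩, Subtype.ext (div_mul_cancel₀ _ hz)⟩

theorem mem_span_range_intsSubring_iff {ι : Type*} [Nonempty ι] {f : ι → v.intsSubring}
    {y : v.intsSubring} : y ∈ Ideal.span (Set.range f) ↔ ∃ i, v (f i : L) ≤ v (y : L) := by
  have hdir : Directed (· ≤ ·) fun i => Ideal.span {f i} := by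
    intro i j
    rcases le_total (v (f i : L)) (v (f j : L)) with h | h
    · exact ⟨i, le_rfl, Ideal.span_singleton_le_span_singleton.mpr
        (Ideal.mem_span_singleton.mp (mem_span_singleton_intsSubring_iff.mpr h))⟩
    · exact ⟨j, Ideal.span_singleton_le_span_singleton.mpr
        (Ideal.mem_span_singleton.mp (mem_span_singleton_intsSubring_iff.mpr h)), le_rfl⟩
  rw [Ideal.span, Submodule.span_range_eq_iSup, Submodule.mem_iSup_of_directed _ hdir]
  exact exists_congr fun i => mem_span_singleton_intsSubring_iff

theorem exists_coe_eq_and_mem_span_range_intsSubring_iff {ι : Type*} [Nonempty ι]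
    {f : ι → v.intsSubring} {x : L} :
    (∃ y : v.intsSubring, (y : L) = x ∧ y ∈ Ideal.span (Set.range f)) ↔
      ∃ i, v (f i : L) ≤ v x := by
  simp_rw [mem_span_range_intsSubring_iff]
  constructor
  · rintro ⟨y, rfl, h⟩
    exact h
  · rintro ⟨i, hi⟩
    exact ⟨⟨x, (f i).2.trans hi⟩, rfl, i, hi⟩

theorem span_range_intsSubring_pow {ι : Type*} [Nonempty ι] (f : ι → v.intsSubring) (n : ℕ) :
    Ideal.span (Set.range f) ^ n = Ideal.span (Set.range fun i => f i ^ n) := by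
  induction n with
  | zero => simp [Set.range_const]
  | succ n ih =>
    rw [pow_succ, ih, Ideal.span_mul_span']
    apply le_antisymm
    · rw [Ideal.span_le]
      rintro _ ⟨_, ⟨i, rfl⟩, _, ⟨j, rfl⟩, rfl⟩
      rw [SetLike.mem_coe, mem_span_range_intsSubring_iff]
      simp only [Subring.coe_mul, SubmonoidClass.coe_pow, v.map_mul, v.map_pow, succ_nsmul]
      rcases le_total (v (f i : L)) (v (f j : L)) with h | h
      · exact ⟨i, add_le_add_right h _⟩
      · exact ⟨j, add_le_add_left (nsmul_le_nsmul_right h n) _⟩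
    · refine Ideal.span_mono ?_
      rintro _ ⟨i, rfl⟩
      exact ⟨_, ⟨i, rfl⟩, _, ⟨i, rfl⟩, (pow_succ _ _).symm⟩

theorem le_zero_of_comap_isEquiv {σ : L →+* L} (hσ : (v.comap σ).IsEquiv v) {x : L}
    (hx : σ x = x + 1) : v x ≤ 0 := by
  by_contra! hpos
  have hσx : v (σ x) = v 1 := by
    rw [hx, add_comm, v.map_add_eq_of_lt_left (by rwa [v.map_one])]
  have hle : v (σ x) ≤ v (σ 1) ↔ v x ≤ v 1 := hσ 1 x
  rw [hσx, σ.map_one, v.map_one] at hle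
  exact (hle.mp le_rfl).not_gt hpos

end AddValuation

section ArtinSchreier

variable {K L : Type*} [Field K] [Field L] [Algebra K L]

theorem minpoly_eq_of_adjoin_eq_top [FiniteDimensional K L] {x : L}
    (hx : Algebra.adjoin K {x} = ⊤) {g : K[X]} (hg : g.Monic)
    (hdeg : g.natDegree = Module.finrank K L) (hroot : aeval x g = 0) : minpoly K x = g :=
  (eq_of_monic_of_dvd_of_natDegree_le (minpoly.monic (.of_finite K x)) hg
    (minpoly.dvd K x hroot)
    (by rw [hdeg, (PowerBasis.ofAdjoinEqTop (.of_finite K x) hx).finrank]; rfl)).symm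

theorem ne_algebraMap_of_adjoin_eq_top {x : L} (hx : Algebra.adjoin K {x} = ⊤)
    (hrank : Module.finrank K L ≠ 1) (c : K) : x ≠ algebraMap K L c := by
  rintro rfl
  apply hrank
  rw [← Subalgebra.bot_eq_top_iff_finrank_eq_one, eq_top_iff, ← hx, Algebra.adjoin_le_iff,
    Set.singleton_subset_iff]
  exact Subalgebra.algebraMap_mem ⊥ c

theorem adjoin_mul_sub_eq_top {x : L} (hx : Algebra.adjoin K {x} = ⊤) {t : K} (ht : t ≠ 0)
    (c : K) : Algebra.adjoin K {algebraMap K L t * (x - algebraMap K L c)} = ⊤ := by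
  rw [eq_top_iff, ← hx, Algebra.adjoin_le_iff, Set.singleton_subset_iff]
  set y := algebraMap K L t * (x - algebraMap K L c)
  have hxy : x = algebraMap K L t⁻¹ * y + algebraMap K L c := by
    rw [← mul_assoc, ← map_mul, inv_mul_cancel₀ ht, map_one, one_mul, sub_add_cancel]
  rw [hxy]
  exact add_mem (mul_mem (Subalgebra.algebraMap_mem _ _) (Algebra.self_mem_adjoin_singleton K _))
    (Subalgebra.algebraMap_mem _ _)

variable {p : ℕ}

theorem monic_X_pow_sub_C_mul_X_sub_C (hp : 1 < p) (b d : K) : (X ^ p - C b * X - C d).Monic := by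
  rw [sub_sub]
  exact monic_X_pow_sub (degree_linear_le.trans_lt (by exact_mod_cast hp))

theorem natDegree_X_pow_sub_C_mul_X_sub_C (hp : 1 < p) (b d : K) :
    (X ^ p - C b * X - C d).natDegree = p := by
  rw [sub_sub, natDegree_sub_eq_left_of_natDegree_lt
    (natDegree_linear_le.trans_lt (by rwa [natDegree_X_pow])), natDegree_X_pow]

theorem derivative_X_pow_sub_C_mul_X_sub_C [CharP K p] (b d : K) :
    derivative (X ^ p - C b * X - C d) = -C b := by
  simp [derivative_X_pow]

variable [CharP K p] (hp : p.Prime) (hdeg : Module.finrank K L = p) {θ : L}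
  (hgen : Algebra.adjoin K {θ} = ⊤) {a : K} (hAS : θ ^ p - θ = algebraMap K L a)
include hp hdeg hgen hAS

theorem minpoly_artinSchreier_affine {t : K} (ht : t ≠ 0) (c : K) :
    minpoly K (algebraMap K L t * (θ - algebraMap K L c)) =
      X ^ p - C (t ^ (p - 1)) * X - C (t ^ p * (a + c - c ^ p)) := by
  have := Fact.mk hp
  have := charP_of_injective_algebraMap (algebraMap K L).injective p
  have : FiniteDimensional K L := Module.finite_of_finrank_pos (hdeg ▸ hp.pos)
  apply minpoly_eq_of_adjoin_eq_top (adjoin_mul_sub_eq_top hgen ht c)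
    (monic_X_pow_sub_C_mul_X_sub_C hp.one_lt _ _)
    (by rw [natDegree_X_pow_sub_C_mul_X_sub_C hp.one_lt, hdeg])
  have hθp : θ ^ p = algebraMap K L a + θ := by rw [← hAS, sub_add_cancel]
  have htp : algebraMap K L t ^ (p - 1) * algebraMap K L t = algebraMap K L t ^ p := by
    rw [← pow_succ, Nat.sub_add_cancel hp.one_lt.le]
  simp only [map_sub, map_mul, aeval_X, aeval_C, map_add, map_pow]
  rw [mul_pow, sub_pow_char, hθp, ← mul_assoc, htp]
  ring

theorem aeval_derivative_minpoly_artinSchreier_affine {t : K} (ht : t ≠ 0) (c : K) :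
    aeval (algebraMap K L t * (θ - algebraMap K L c))
        (derivative (minpoly K (algebraMap K L t * (θ - algebraMap K L c)))) =
      -algebraMap K L t ^ (p - 1) := by
  rw [minpoly_artinSchreier_affine hp hdeg hgen hAS ht, derivative_X_pow_sub_C_mul_X_sub_C]
  simp

theorem exists_algHom_artinSchreier_apply_eq_add_one : ∃ σ : L →ₐ[K] L, σ θ = θ + 1 := by
  have := Fact.mk hp
  have := charP_of_injective_algebraMap (algebraMap K L).injective p
  have : FiniteDimensional K L := Module.finite_of_finrank_pos (hdeg ▸ hp.pos)
  let pb := PowerBasis.ofAdjoinEqTop (.of_finite K θ) hgen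
  have hmin : minpoly K θ = X ^ p - C 1 * X - C a :=
    minpoly_eq_of_adjoin_eq_top hgen (monic_X_pow_sub_C_mul_X_sub_C hp.one_lt _ _)
      (by rw [natDegree_X_pow_sub_C_mul_X_sub_C hp.one_lt, hdeg])
      (by simp [hAS])
  have hroot : aeval (θ + 1) (minpoly K pb.gen) = 0 := by
    rw [PowerBasis.ofAdjoinEqTop_gen, hmin]
    simp only [map_sub, aeval_X_pow, aeval_X, aeval_C, map_one, one_mul]
    rw [add_pow_char, one_pow, ← hAS]
    ring
  exact ⟨pb.lift (θ + 1) hroot, pb.lift_gen _ hroot⟩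

end ArtinSchreier

theorem stmt9_general {K L Γ : Type} [Field K] [Field L] [Algebra K L]
    [AddCommGroup Γ] [LinearOrder Γ] [IsOrderedAddMonoid Γ]
    (v : AddValuation L (WithTop Γ)) (p : ℕ) (hp : p.Prime) [CharP K p]
    -- `[L : K] = p`
    (hdeg : Module.finrank K L = p)
    -- the extension is unibranched
    (hunib : ∀ (Γ' : Type) [AddCommGroup Γ'] [LinearOrder Γ'] [IsOrderedAddMonoid Γ']
      (w : AddValuation L (WithTop Γ')),
      (w.comap (algebraMap K L)).IsEquiv (v.comap (algebraMap K L)) → w.IsEquiv v)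
    -- `L = K(θ)` with `θ^p − θ = a ∈ K`
    (θ : L) (hgen : Algebra.adjoin K {θ} = ⊤)
    (a : K) (hAS : θ ^ p - θ = algebraMap K L a)
    -- the elements `t c`
    (t : K → K)
    (ht : ∀ c : K, v (algebraMap K L (t c)) = - v (θ - algebraMap K L c)) :
    (∀ c : K,
      Polynomial.aeval (algebraMap K L (t c) * (θ - algebraMap K L c))
          (Polynomial.derivative
            (minpoly K (algebraMap K L (t c) * (θ - algebraMap K L c)))) =
        - (algebraMap K L (t c)) ^ (p - 1)) ∧
    (Ideal.span {x : v.intsSubring | ∃ c : K,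
        (x : L) = Polynomial.aeval (algebraMap K L (t c) * (θ - algebraMap K L c))
          (Polynomial.derivative
            (minpoly K (algebraMap K L (t c) * (θ - algebraMap K L c))))} =
      (Ideal.span {x : v.intsSubring | ∃ c : K, (x : L) = algebraMap K L (t c)}) ^
        (p - 1)) ∧
    (∀ x : L,
      ((∃ y : v.intsSubring, (y : L) = x ∧
          y ∈ Ideal.span {z : v.intsSubring | ∃ c : K, (z : L) = algebraMap K L (t c)}) ∧
        x ≠ 0) ↔
      (x ≠ 0 ∧ ∃ c : K, - v (θ - algebraMap K L c) ≤ v x)) := by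
  obtain ⟨σ, hσθ⟩ := exists_algHom_artinSchreier_apply_eq_add_one hp hdeg hgen hAS
  have hσv : (v.comap (σ : L →+* L)).IsEquiv v :=
    hunib Γ _ (.of_eq <| by rw [← AddValuation.comap_comp, AlgHom.comp_algebraMap])
  have hvθ : ∀ c : K, v (θ - algebraMap K L c) ≤ 0 := fun c =>
    v.le_zero_of_comap_isEquiv hσv (by simp [hσθ, sub_add_eq_add_sub])
  have hvt : ∀ c : K, 0 ≤ v (algebraMap K L (t c)) := fun c =>
    (ht c).symm ▸ LinearOrderedAddCommGroupWithTop.neg_nonneg_of_nonpos (hvθ c)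
  have ht0 : ∀ c : K, t c ≠ 0 := fun c htc => by
    have hθc := ht c
    rw [htc, map_zero, v.map_zero, eq_comm, LinearOrderedAddCommGroupWithTop.neg_eq_top, v.top_iff,
      sub_eq_zero] at hθc
    exact ne_algebraMap_of_adjoin_eq_top hgen (hdeg ▸ hp.one_lt.ne') c hθc
  let T : K → v.intsSubring := fun c => ⟨algebraMap K L (t c), hvt c⟩
  have hder := fun c => aeval_derivative_minpoly_artinSchreier_affine hp hdeg hgen hAS (ht0 c) c
  have hI : {x : v.intsSubring | ∃ c, (x : L) = algebraMap K L (t c)} = Set.range T :=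
    Subring.setOf_exists_coe_eq_range fun _ => rfl
  refine ⟨hder, ?_, fun x => ?_⟩
  · simp_rw [hder]
    rw [Subring.setOf_exists_coe_eq_range (G := fun c => -(T c ^ (p - 1))) fun c => by simp [T],
      hI, AddValuation.span_range_intsSubring_pow, ← Set.neg_range, Ideal.span, Submodule.span_neg]
  · simp_rw [hI, AddValuation.exists_coe_eq_and_mem_span_range_intsSubring_iff, ← ht]
    exact and_comm

/-- **Lemma (values of derivatives, Artin-Schreier case).** Let `(L|K,v)` be an
Artin-Schreier defect extension of degree `p` with Artin-Schreier generator `θ`.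
With `θ_c := t_c·(θ−c)` and `g_c` the minimal polynomial of `θ_c` over `K`:
(i) `g_c'(θ_c) = −t_c^{p−1}`;
(ii) the `O_L`-ideal generated by the `g_c'(θ_c)` equals `I^{p−1}`, where `I` is the
`O_L`-ideal generated by the `t_c`;
(iii) the nonzero elements of `I` are exactly the `x ∈ L` with `v(x) ≥ −v(θ−c)` for
some `c ∈ K`. -/
theorem stmt9 {K L Γ : Type} [Field K] [Field L] [Algebra K L]
    [AddCommGroup Γ] [LinearOrder Γ] [IsOrderedAddMonoid Γ]
    (v : AddValuation L (WithTop Γ)) (p : ℕ) (hp : p.Prime) [CharP K p]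
    -- `[L : K] = p`
    (hdeg : Module.finrank K L = p)
    -- the residue characteristic equals `p`
    (hresp : (0 : WithTop Γ) < v (p : L))
    -- the extension is unibranched
    (hunib : ∀ (Γ' : Type) [AddCommGroup Γ'] [LinearOrder Γ'] [IsOrderedAddMonoid Γ']
      (w : AddValuation L (WithTop Γ')),
      (w.comap (algebraMap K L)).IsEquiv (v.comap (algebraMap K L)) → w.IsEquiv v)
    -- `L = K(θ)` with `θ^p − θ = a ∈ K`
    (θ : L) (hgen : Algebra.adjoin K {θ} = ⊤)
    (a : K) (hAS : θ ^ p - θ = algebraMap K L a)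
    -- the elements `t c`
    (t : K → K)
    (ht : ∀ c : K, v (algebraMap K L (t c)) = - v (θ - algebraMap K L c)) :
    (∀ c : K,
      Polynomial.aeval (algebraMap K L (t c) * (θ - algebraMap K L c))
          (Polynomial.derivative
            (minpoly K (algebraMap K L (t c) * (θ - algebraMap K L c)))) =
        - (algebraMap K L (t c)) ^ (p - 1)) ∧
    (Ideal.span {x : v.intsSubring | ∃ c : K,
        (x : L) = Polynomial.aeval (algebraMap K L (t c) * (θ - algebraMap K L c))
          (Polynomial.derivative
            (minpoly K (algebraMap K L (t c) * (θ - algebraMap K L c))))} =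
      (Ideal.span {x : v.intsSubring | ∃ c : K, (x : L) = algebraMap K L (t c)}) ^
        (p - 1)) ∧
    (∀ x : L,
      ((∃ y : v.intsSubring, (y : L) = x ∧
          y ∈ Ideal.span {z : v.intsSubring | ∃ c : K, (z : L) = algebraMap K L (t c)}) ∧
        x ≠ 0) ↔
      (x ≠ 0 ∧ ∃ c : K, - v (θ - algebraMap K L c) ≤ v x)) :=
  stmt9_general v p hp hdeg hunib θ hgen a hAS t ht
end

section
/- Let A be an integrally closed domain with quotient field K, let L|K be an algebraic field extension, and let B be a domain with quotient field L such that A ⊆ B is an integral ring extension. Let S be a nonempty totally ordered set and (b_α)_{α∈S} elements of B such that A[b_α] ⊆ A[b_β] whenever α ≤ β, and ⋃_{α∈S} A[b_α] = B. Suppose there are nonzero elements (a_α)_{α∈S} of A such that for all α ≤ β there exist d_{α,β}, c_{α,β} ∈ A with a_α = d_{α,β}·a_β and b_α = d_{α,β}·b_β + c_{α,β}. Let h_α ∈ K[X] be the minimal polynomial of b_α over K, let U be the ideal of B generated by {a_α : α ∈ S}, and let V be the ideal of B generated by {h_α'(b_α) : α ∈ S}. Then there is an isomorphism of B-modules Ω_{B|A}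 ≅ U/UV, where U/UV is the quotient of the B-module U by its submodule U·V. -/
/-!
Over the chain `B = ⋃ A[b_α]`, the module `Ω_{B|A}` is generated by the `d b_α`, with
`d b_α = d_{α,β} · d b_β` and `p'(b_α) · d b_α = 0` whenever `p(b_α) = 0`. As `A` is integrally
closed, such a `p` is a multiple of `h_α`, so `p'(b_α) ∈ (h_α'(b_α))`. Comparing
`h_α(d_{α,β} X + c_{α,β})` with `h_β`, a monic divisor of the same degree, gives
`h_α'(b_α) = d_{α,β}^{n-1} h_β'(b_β)`, so `V` kills every `d b_β`. Hence `t a_β ↦ t · d b_β` is a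
well-defined map `U → Ω_{B|A}` (because `a_α = d_{α,β} a_β` in the domain `B`) vanishing on `UV`,
while `f(b_α) ↦ f'(b_α) a_α` is a well-defined derivation `B → U/UV`; the induced maps are
mutually inverse.
-/

open Polynomial

namespace Polynomial

variable {R B : Type*} [CommSemiring R] [CommSemiring B] [Algebra R B]

theorem aeval_comp_C_mul_X_add_C (f : R[X]) (d c : R) (y : B) :
    aeval y (f.comp (C d * X + C c)) = aeval (algebraMap R B d * y + algebraMap R B c) f := by
  simp [aeval_comp]

theorem aeval_derivative_comp_C_mul_X_add_C (f : R[X]) (d c : R) (y : B) :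
    aeval y (derivative (f.comp (C d * X + C c))) =
      algebraMap R B d * aeval (algebraMap R B d * y + algebraMap R B c) (derivative f) := by
  rw [derivative_comp, map_mul, aeval_comp_C_mul_X_add_C, mul_comm (algebraMap R B d)]
  congr 1
  simp

theorem aeval_derivative_dvd_of_dvd {x : B} {p q : R[X]} (hp : aeval x p = 0) (h : p ∣ q) :
    aeval x (derivative p) ∣ aeval x (derivative q) := by
  obtain ⟨r, rfl⟩ := h
  simp [derivative_mul, hp]

end Polynomial

theorem Derivation.map_algebraMap_mul_add {A B M : Type*} [CommSemiring A] [CommSemiring B]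
    [Algebra A B] [AddCommMonoid M] [Module A M] [Module B M] [IsScalarTower A B M]
    (D : Derivation A B M) (d c : A) (y : B) :
    D (algebraMap A B d * y + algebraMap A B c) = algebraMap A B d • D y := by
  simp [Derivation.leibniz]

section AffineChain

variable {A B M S : Type*} [CommRing A] [CommRing B] [Algebra A B] [AddCommGroup M] [Module B M]
  [Preorder S] [IsDirectedOrder S] {b : S → B} {d c : S → S → A}

theorem aeval_derivative_smul_eq_of_affine_chain
    (hb : ∀ α β, α ≤ β → b α = algebraMap A B (d α β) * b β + algebraMap A B (c α β))
    {m : S → M} (hm : ∀ α β, α ≤ β → m α = algebraMap A B (d α β) • m β)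
    (hrel : ∀ α (p : A[X]), aeval (b α) p = 0 → aeval (b α) (derivative p) • m α = 0)
    {α β : S} {f g : A[X]} (h : aeval (b α) f = aeval (b β) g) :
    aeval (b α) (derivative f) • m α = aeval (b β) (derivative g) • m β := by
  have htransfer {α β} (hαβ : α ≤ β) (f : A[X]) :
      let f' := f.comp (C (d α β) * X + C (c α β))
      aeval (b β) f' = aeval (b α) f ∧
        aeval (b β) (derivative f') • m β = aeval (b α) (derivative f) • m α := by
    refine ⟨by rw [aeval_comp_C_mul_X_add_C, ← hb α β hαβ], ?_⟩
    rw [aeval_derivative_comp_C_mul_X_add_C, ← hb α β hαβ, hm α β hαβ, smul_smul, mul_comm]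
  -- at a common upper index `γ` the difference of the two polynomials vanishes at `b γ`
  obtain ⟨γ, hαγ, hβγ⟩ := exists_ge_ge α β
  obtain ⟨hf, hf'⟩ := htransfer hαγ f
  obtain ⟨hg, hg'⟩ := htransfer hβγ g
  rw [← hf', ← hg', ← sub_eq_zero, ← sub_smul, ← map_sub, ← derivative_sub]
  exact hrel γ _ (by rw [map_sub, hf, hg, h, sub_self])

theorem Derivation.exists_of_affine_chain [Module A M] [IsScalarTower A B M]
    (hunion : ∀ x : B, ∃ α, x ∈ Algebra.adjoin A {b α})
    (hb : ∀ α β, α ≤ β → b α = algebraMap A B (d α β) * b β + algebraMap A B (c α β))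
    (m : S → M) (hm : ∀ α β, α ≤ β → m α = algebraMap A B (d α β) • m β)
    (hrel : ∀ α (p : A[X]), aeval (b α) p = 0 → aeval (b α) (derivative p) • m α = 0) :
    ∃ D : Derivation A B M, ∀ α, D (b α) = m α := by
  have hrep (x : B) : ∃ α, ∃ f : A[X], aeval (b α) f = x := by
    obtain ⟨α, hx⟩ := hunion x
    exact ⟨α, by rwa [Algebra.adjoin_singleton_eq_range_aeval, AlgHom.mem_range] at hx⟩
  have hrep₂ (x y : B) : ∃ γ, ∃ f g : A[X], aeval (b γ) f = x ∧ aeval (b γ) g = y := by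
    obtain ⟨α, f, rfl⟩ := hrep x
    obtain ⟨β, g, rfl⟩ := hrep y
    obtain ⟨γ, hαγ, hβγ⟩ := exists_ge_ge α β
    exact ⟨γ, _, _, by rw [aeval_comp_C_mul_X_add_C, ← hb α γ hαγ],
      by rw [aeval_comp_C_mul_X_add_C, ← hb β γ hβγ]⟩
  let D (x : B) : M := aeval (b (hrep x).choose) (derivative (hrep x).choose_spec.choose) •
    m (hrep x).choose
  have hD {x α} {f : A[X]} (h : aeval (b α) f = x) : D x = aeval (b α) (derivative f) • m α :=
    aeval_derivative_smul_eq_of_affine_chain hb hm hrel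
      ((hrep x).choose_spec.choose_spec.trans h.symm)
  let Dlin : B →ₗ[A] M :=
    { toFun := D
      map_add' x y := by
        obtain ⟨γ, f, g, rfl, rfl⟩ := hrep₂ x y
        rw [hD rfl, hD rfl, hD (map_add (aeval (b γ)) f g), derivative_add, map_add, add_smul]
      map_smul' r x := by
        obtain ⟨α, f, rfl⟩ := hrep x
        rw [hD rfl, hD (_root_.map_smul (aeval (b α)) r f), derivative_smul, _root_.map_smul,
          smul_assoc]
        rfl }
  refine ⟨Derivation.mk' Dlin fun x y => ?_, fun α => ?_⟩
  · obtain ⟨γ, f, g, rfl, rfl⟩ := hrep₂ x y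
    change D _ = _ • D _ + _ • D _
    rw [hD rfl, hD rfl, hD (map_mul (aeval (b γ)) f g), derivative_mul, map_add, map_mul, map_mul,
      add_smul, mul_smul, mul_smul, smul_comm (aeval (b γ) (derivative f)), add_comm]
  · change D _ = _
    rw [hD (aeval_X (b α)), derivative_X, map_one, one_smul]

end AffineChain

section DirectedSpan

variable {R ι : Type*} [Preorder ι] [IsDirectedOrder ι] [Nonempty ι]

theorem Ideal.exists_mul_eq_of_mem_span_range_mul [CommSemiring R] {g : ι → R}
    (hg : ∀ i j, i ≤ j → g j ∣ g i) {I : Ideal R} {z : R}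
    (hz : z ∈ Ideal.span (Set.range g) * I) : ∃ i, ∃ m ∈ I, g i * m = z := by
  have hmono : Monotone fun i => Ideal.span {g i} * I := fun i j hij =>
    Ideal.mul_mono_left (Ideal.span_singleton_le_span_singleton.mpr (hg i j hij))
  rw [Ideal.span, Submodule.span_range_eq_iSup, Submodule.iSup_mul,
    Submodule.mem_iSup_of_directed _ hmono.directed_le] at hz
  obtain ⟨i, hi⟩ := hz
  exact ⟨i, Submodule.mem_span_singleton_mul.mp hi⟩

theorem Ideal.exists_mul_eq_of_mem_span_range [CommSemiring R] {g : ι → R}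
    (hg : ∀ i j, i ≤ j → g j ∣ g i) {z : R} (hz : z ∈ Ideal.span (Set.range g)) :
    ∃ i t, t * g i = z := by
  obtain ⟨i, t, -, rfl⟩ :=
    Ideal.exists_mul_eq_of_mem_span_range_mul hg (I := ⊤) (by rwa [Ideal.mul_top])
  exact ⟨i, t, mul_comm t (g i)⟩

theorem Ideal.exists_linearMap_span_range {M : Type*} [CommRing R] [IsDomain R]
    [AddCommGroup M] [Module R M] {g : ι → R} (hg : ∀ i, g i ≠ 0) (ω : ι → M)
    (hcompat : ∀ i j, i ≤ j → ∃ e, g i = e * g j ∧ ω i = e • ω j) :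
    ∃ ψ : Ideal.span (Set.range g) →ₗ[R] M,
      ∀ (u : Ideal.span (Set.range g)) i t, t * g i = u → ψ u = t • ω i := by
  have hdvd (i j) (hij : i ≤ j) : g j ∣ g i := by
    obtain ⟨e, he, -⟩ := hcompat i j hij
    exact Dvd.intro_left e he.symm
  have hrep (u : Ideal.span (Set.range g)) : ∃ i t, t * g i = u :=
    Ideal.exists_mul_eq_of_mem_span_range hdvd u.2
  have hwd {i j t s} (h : t * g i = s * g j) : t • ω i = s • ω j := by
    obtain ⟨k, hik, hjk⟩ := exists_ge_ge i j
    obtain ⟨e, hge, hωe⟩ := hcompat i k hik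
    obtain ⟨e', hge', hωe'⟩ := hcompat j k hjk
    have : t * e = s * e' :=
      mul_right_cancel₀ (hg k) (by rw [mul_assoc, mul_assoc, ← hge, ← hge', h])
    rw [hωe, hωe', smul_smul, smul_smul, this]
  let ψ (u : Ideal.span (Set.range g)) : M := (hrep u).choose_spec.choose • ω (hrep u).choose
  have hψ (u : Ideal.span (Set.range g)) i t (h : t * g i = u) : ψ u = t • ω i :=
    hwd ((hrep u).choose_spec.choose_spec.trans h.symm)
  refine ⟨{ toFun := ψ, map_add' := fun u v => ?_, map_smul' := fun r u => ?_ }, hψ⟩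
  · obtain ⟨i, t, ht⟩ := hrep u
    obtain ⟨j, s, hs⟩ := hrep v
    obtain ⟨k, hik, hjk⟩ := exists_ge_ge i j
    obtain ⟨e, hge, -⟩ := hcompat i k hik
    obtain ⟨e', hge', -⟩ := hcompat j k hjk
    have hu : t * e * g k = u := by rw [mul_assoc, ← hge, ht]
    have hv : s * e' * g k = v := by rw [mul_assoc, ← hge', hs]
    rw [hψ u k _ hu, hψ v k _ hv, hψ (u + v) k (t * e + s * e') (by rw [add_mul, hu, hv]; rfl),
      add_smul]
  · obtain ⟨i, t, ht⟩ := hrep u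
    rw [hψ u i t ht, hψ (r • u) i (r * t) (by rw [mul_assoc, ht]; rfl), mul_smul]
    rfl

end DirectedSpan

theorem KaehlerDifferential.nonempty_linearEquiv_of_affine_chain {A B S : Type*} [CommRing A]
    [CommRing B] [IsDomain B] [Algebra A B] [Preorder S] [IsDirectedOrder S] [Nonempty S]
    {b : S → B} (hunion : ∀ x : B, ∃ α, x ∈ Algebra.adjoin A {b α})
    {a : S → B} (ha : ∀ α, a α ≠ 0) {d c : S → S → A}
    (hd : ∀ α β, α ≤ β → a α = algebraMap A B (d α β) * a β)
    (hb : ∀ α β, α ≤ β → b α = algebraMap A B (d α β) * b β + algebraMap A B (c α β))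
    {V : Ideal B} (hrel : ∀ α (p : A[X]), aeval (b α) p = 0 → aeval (b α) (derivative p) ∈ V)
    (hann : ∀ α, V ≤ (B ∙ D A B (b α)).annihilator) :
    Nonempty (Ω[B⁄A] ≃ₗ[B] Ideal.span (Set.range a) ⧸
      Submodule.comap (Ideal.span (Set.range a)).subtype (Ideal.span (Set.range a) * V)) := by
  set U := Ideal.span (Set.range a)
  set N := Submodule.comap U.subtype (U * V)
  have haU (α) : a α ∈ U := Ideal.subset_span ⟨α, rfl⟩
  have hdvd (α β) (h : α ≤ β) : a β ∣ a α := Dvd.intro_left _ (hd α β h).symm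
  let m (α : S) : U ⧸ N := N.mkQ ⟨a α, haU α⟩
  obtain ⟨D', hD'⟩ := Derivation.exists_of_affine_chain hunion hb m
    (fun α β h => by rw [← map_smul]; exact congrArg N.mkQ (Subtype.ext (hd α β h)))
    (fun α p hp => by
      rw [← map_smul, Submodule.mkQ_apply, Submodule.Quotient.mk_eq_zero]
      change aeval (b α) (derivative p) * a α ∈ U * V
      exact Ideal.mul_mem_mul_rev (haU α) (hrel α p hp))
  obtain ⟨ψ, hψ⟩ := Ideal.exists_linearMap_span_range ha (fun α => D A B (b α))
    fun α β h => ⟨_, hd α β h, by rw [hb α β h, Derivation.map_algebraMap_mul_add]⟩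
  have hNψ : N ≤ LinearMap.ker ψ := by
    intro u hu
    obtain ⟨δ, v, hv, huv⟩ := Ideal.exists_mul_eq_of_mem_span_range_mul hdvd hu
    rw [LinearMap.mem_ker, hψ u δ v (by rw [mul_comm, huv]; rfl),
      ← Submodule.mem_annihilator_span_singleton]
    exact hann δ hv
  refine ⟨.ofLinearMap (f := D'.liftKaehlerDifferential) (g := N.liftQ ψ hNψ) ?_ ?_⟩
  · refine Submodule.linearMap_qext _ (LinearMap.ext fun u => ?_)
    obtain ⟨β, t, ht⟩ := Ideal.exists_mul_eq_of_mem_span_range hdvd u.2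
    rw [LinearMap.comp_apply, LinearMap.comp_apply, Submodule.mkQ_apply, Submodule.liftQ_apply,
      hψ u β t ht, map_smul, Derivation.liftKaehlerDifferential_comp_D, hD', ← map_smul]
    exact congrArg N.mkQ (Subtype.ext ht)
  · refine Derivation.liftKaehlerDifferential_unique _ _ (Derivation.ext fun x => ?_)
    obtain ⟨α, hx⟩ := hunion x
    refine Derivation.eqOn_adjoin (Set.eqOn_singleton.mpr ?_) hx
    change (N.liftQ ψ hNψ) (D'.liftKaehlerDifferential (D A B (b α))) = D A B (b α)
    rw [Derivation.liftKaehlerDifferential_comp_D, hD']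
    exact (N.liftQ_apply ψ _).trans (by rw [hψ _ α 1 (one_mul _), one_smul])

section IsIntegrallyClosed

variable {A B : Type*} [CommRing A] [IsDomain A] [IsIntegrallyClosed A]
  [CommRing B] [IsDomain B] [Algebra A B] [Module.IsTorsionFree A B]

theorem IsIntegrallyClosed.natDegree_minpoly_le_of_eq_algebraMap_mul_add {x y : B}
    (hy : IsIntegral A y) {d c : A} (hxy : x = algebraMap A B d * y + algebraMap A B c) :
    (minpoly A x).natDegree ≤ (minpoly A y).natDegree := by
  subst hxy
  -- `x` is a root of the monic polynomial `d ^ n * (minpoly A y) ((X - c) / d)`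
  have hmonic : ((minpoly A y).scaleRoots d |>.comp (X - C c)).Monic :=
    ((monic_scaleRoots_iff d).mpr (minpoly.monic hy)).comp_X_sub_C c
  have hroot : aeval (algebraMap A B d * y + algebraMap A B c)
      ((minpoly A y).scaleRoots d |>.comp (X - C c)) = 0 := by
    rw [aeval_comp]
    simpa using scaleRoots_aeval_eq_zero (r := d) (minpoly.aeval A y)
  calc _ ≤ ((minpoly A y).scaleRoots d |>.comp (X - C c)).natDegree :=
        natDegree_le_natDegree
          (minpoly.IsIntegrallyClosed.degree_le_of_ne_zero hmonic.ne_zero hroot)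
    _ = (minpoly A y).natDegree := by
        rw [natDegree_comp, natDegree_X_sub_C, mul_one, natDegree_scaleRoots]

theorem IsIntegrallyClosed.aeval_derivative_minpoly_of_eq_algebraMap_mul_add {x y : B}
    (hy : IsIntegral A y) {d c : A} (hd : d ≠ 0)
    (hxy : x = algebraMap A B d * y + algebraMap A B c) :
    aeval x (derivative (minpoly A x)) =
      algebraMap A B d ^ ((minpoly A x).natDegree - 1) * aeval y (derivative (minpoly A y)) := by
  have hx : IsIntegral A x := hxy ▸ (isIntegral_algebraMap.mul hy).add isIntegral_algebraMap
  have hchain := aeval_derivative_comp_C_mul_X_add_C (minpoly A x) d c y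
  set n := (minpoly A x).natDegree
  set p := (minpoly A x).comp (C d * X + C c)
  have hdvd : minpoly A y ∣ p := minpoly.isIntegrallyClosed_dvd hy <| by
    rw [aeval_comp_C_mul_X_add_C, ← hxy, minpoly.aeval]
  have hdeg : p.natDegree = n := by rw [natDegree_comp, natDegree_linear hd, mul_one]
  have hlead : p.leadingCoeff = d ^ n := by
    rw [leadingCoeff_comp (by rw [natDegree_linear hd]; exact one_ne_zero),
      (minpoly.monic hx).leadingCoeff, leadingCoeff_linear hd, one_mul]
  have hp : p = C (d ^ n) * minpoly A y := by
    rw [← hlead]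
    exact eq_leadingCoeff_mul_of_monic_of_dvd_of_natDegree_le (minpoly.monic hy) hdvd
      (hdeg.trans_le (IsIntegrallyClosed.natDegree_minpoly_le_of_eq_algebraMap_mul_add hy hxy))
  rw [← hxy, hp, derivative_C_mul, map_mul, aeval_C] at hchain
  refine mul_left_cancel₀ ((map_ne_zero_iff _ (FaithfulSMul.algebraMap_injective A B)).mpr hd) ?_
  rw [← hchain, ← mul_assoc, ← pow_succ', Nat.sub_add_cancel (minpoly.natDegree_pos hx), map_pow]

theorem IsIntegrallyClosed.span_aeval_derivative_minpoly_le_annihilator {S : Type*}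
    [LinearOrder S] {b : S → B} (hint : ∀ α, IsIntegral A (b α)) {d c : S → S → A}
    (hd : ∀ α β, α ≤ β → d α β ≠ 0)
    (hb : ∀ α β, α ≤ β → b α = algebraMap A B (d α β) * b β + algebraMap A B (c α β)) (δ : S) :
    Ideal.span (Set.range fun γ => aeval (b γ) (derivative (minpoly A (b γ)))) ≤
      (B ∙ KaehlerDifferential.D A B (b δ)).annihilator := by
  have hkill (γ) :
      aeval (b γ) (derivative (minpoly A (b γ))) • KaehlerDifferential.D A B (b γ) = 0 := by
    rw [← Derivation.map_aeval, minpoly.aeval, map_zero]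
  rw [Ideal.span_le]
  rintro _ ⟨γ, rfl⟩
  rw [SetLike.mem_coe, Submodule.mem_annihilator_span_singleton]
  dsimp only
  rcases le_total γ δ with h | h
  · rw [aeval_derivative_minpoly_of_eq_algebraMap_mul_add (hint δ) (hd γ δ h) (hb γ δ h),
      mul_smul, hkill, smul_zero]
  · rw [hb δ γ h, Derivation.map_algebraMap_mul_add, smul_comm, hkill, smul_zero]

end IsIntegrallyClosed

theorem IsIntegrallyClosed.aeval_derivative_minpoly_algebraMap {A B : Type*} [CommRing A]
    [IsDomain A] [IsIntegrallyClosed A] [CommRing B] [IsDomain B] [Algebra A B] (K L : Type*)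
    [Field K] [Algebra A K] [IsFractionRing A K] [CommRing L] [Nontrivial L] [Algebra A L]
    [Algebra B L] [Algebra K L] [IsScalarTower A K L] [IsScalarTower A B L] {x : B} (hx : IsIntegral A x) :
    aeval (algebraMap B L x) (derivative (minpoly K (algebraMap B L x))) =
      algebraMap B L (aeval x (derivative (minpoly A x))) := by
  rw [minpoly.isIntegrallyClosed_eq_field_fractions K L hx, derivative_map, aeval_map_algebraMap,
    aeval_algebraMap_apply]

theorem stmt11_general {A B K L : Type} [CommRing A] [IsDomain A] [CommRing B] [IsDomain B]
    [Field K] [Field L]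
    [Algebra A K] [IsFractionRing A K]
    [Algebra B L] [IsFractionRing B L]
    [Algebra A B] [Algebra K L] [Algebra A L]
    [IsScalarTower A K L] [IsScalarTower A B L]
    [IsIntegrallyClosed A]
    [Algebra.IsIntegral A B]
    {S : Type} [LinearOrder S] [Nonempty S]
    (b : S → B)
    (hunion : ∀ x : B, ∃ α : S, x ∈ Algebra.adjoin A {b α})
    (a : S → A) (ha : ∀ α, a α ≠ 0)
    (d c : S → S → A)
    (hd : ∀ α β : S, α ≤ β → a α = d α β * a β)
    (hb : ∀ α β : S, α ≤ β →
      b α = algebraMap A B (d α β) * b β + algebraMap A B (c α β)) :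
    Nonempty ((KaehlerDifferential A B) ≃ₗ[B]
      (↥(Ideal.span (Set.range fun α : S => algebraMap A B (a α))) ⧸
        Submodule.comap
          (Ideal.span (Set.range fun α : S => algebraMap A B (a α))).subtype
          (Ideal.span (Set.range fun α : S => algebraMap A B (a α)) *
            Ideal.span {x : B | ∃ α : S,
              algebraMap B L x =
                Polynomial.aeval (algebraMap B L (b α))
                  (Polynomial.derivative (minpoly K (algebraMap B L (b α))))}))) := by
  have hinj : Function.Injective (algebraMap A B) := by
    refine Function.Injective.of_comp (f := algebraMap B L) ?_
    rw [← RingHom.coe_comp, ← IsScalarTower.algebraMap_eq, IsScalarTower.algebraMap_eq A K L,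
      RingHom.coe_comp]
    exact (algebraMap K L).injective.comp (IsFractionRing.injective A K)
  have : Module.IsTorsionFree A B := Module.isTorsionFree_iff_algebraMap_injective.mpr hinj
  have hint (x : B) : IsIntegral A x := Algebra.IsIntegral.isIntegral x
  have hV : {x : B | ∃ α : S, algebraMap B L x =
      aeval (algebraMap B L (b α)) (derivative (minpoly K (algebraMap B L (b α))))} =
      Set.range fun α => aeval (b α) (derivative (minpoly A (b α))) := by
    ext x
    simp only [Set.mem_ofPred_eq, Set.mem_range,
      IsIntegrallyClosed.aeval_derivative_minpoly_algebraMap K L (hint _),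
      (IsFractionRing.injective B L).eq_iff, eq_comm]
  rw [hV]
  refine KaehlerDifferential.nonempty_linearEquiv_of_affine_chain hunion
    (fun α => (map_ne_zero_iff _ hinj).mpr (ha α)) (fun α β h => by rw [hd α β h, map_mul]) hb
    (fun α p hp => Ideal.mem_of_dvd _ ?_ (Ideal.subset_span ⟨α, rfl⟩))
    (IsIntegrallyClosed.span_aeval_derivative_minpoly_le_annihilator (fun α => hint (b α))
      (fun α β h hd0 => ha α (by rw [hd α β h, hd0, zero_mul])) hb)
  exact aeval_derivative_dvd_of_dvd (minpoly.aeval A (b α))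
    (minpoly.isIntegrallyClosed_dvd (hint _) hp)

/-- **Proposition (direct limit presentation of Kähler differentials).** Let `A` be an
integrally closed domain with quotient field `K`, `L|K` an algebraic field extension,
and `B` a domain with quotient field `L` such that `A ⊆ B` is integral.  Suppose the
`b_α` (indexed by a nonempty totally ordered set `S`) satisfy
`A[b_α] ⊆ A[b_β]` for `α ≤ β` and `⋃ A[b_α] = B`, and there are nonzero `a_α ∈ A`
such that for `α ≤ β` there are `d_{α,β}, c_{α,β} ∈ A` with `a_α = d_{α,β}·a_β` and
`b_α = d_{α,β}·b_β + c_{α,β}`.  With `h_α` the minimal polynomial of `b_α` over `K`,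
`U = (a_α | α)` and `V = (h_α'(b_α) | α)` as ideals of `B`, one has a `B`-module
isomorphism `Ω_{B|A} ≅ U/UV`. -/
theorem stmt11 {A B K L : Type} [CommRing A] [IsDomain A] [CommRing B] [IsDomain B]
    [Field K] [Field L]
    [Algebra A K] [IsFractionRing A K]
    [Algebra B L] [IsFractionRing B L]
    [Algebra A B] [Algebra K L] [Algebra A L]
    [IsScalarTower A K L] [IsScalarTower A B L]
    [IsIntegrallyClosed A]
    [Algebra.IsAlgebraic K L] [Algebra.IsIntegral A B]
    {S : Type} [LinearOrder S] [Nonempty S]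
    (b : S → B)
    (hchain : ∀ α β : S, α ≤ β → Algebra.adjoin A {b α} ≤ Algebra.adjoin A {b β})
    (hunion : ∀ x : B, ∃ α : S, x ∈ Algebra.adjoin A {b α})
    (a : S → A) (ha : ∀ α, a α ≠ 0)
    (d c : S → S → A)
    (hd : ∀ α β : S, α ≤ β → a α = d α β * a β)
    (hb : ∀ α β : S, α ≤ β →
      b α = algebraMap A B (d α β) * b β + algebraMap A B (c α β)) :
    Nonempty ((KaehlerDifferential A B) ≃ₗ[B]
      (↥(Ideal.span (Set.range fun α : S => algebraMap A B (a α))) ⧸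
        Submodule.comap
          (Ideal.span (Set.range fun α : S => algebraMap A B (a α))).subtype
          (Ideal.span (Set.range fun α : S => algebraMap A B (a α)) *
            Ideal.span {x : B | ∃ α : S,
              algebraMap B L x =
                Polynomial.aeval (algebraMap B L (b α))
                  (Polynomial.derivative (minpoly K (algebraMap B L (b α))))}))) :=
  stmt11_general b hunion a ha d c hd hb
end
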